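/- For an explicit s-stage Runge–Kutta method applied with fixed step size h = T/p (p ∈ ℕ, p ≥ 1) to a time-driven ODE, if the internal variable x_{I,i} is periodic of order s at time t^m, then the i-th component of the increment function satisfies Φ_i(t^m, x^m, h) = Φ_i(t^{m-p}, x^{m-p}, h), and consequently the Runge–Kutta update satisfies x_{I,i}^{m+1} = x_{I,i}^{m-p+1}. -/
import Mathlib


open Finset

/-- A variable `v` is periodic of order `ν ≥ 1` with respect to a semi-periodicity
predicate `semi` and input sets `pre`: it is periodic of order 1 if it and all variables
of its input set are semi-periodic, and periodic of order `ν` if it is moreover such that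
all variables in its input set are (at least) periodic of order `ν - 1`.
(Order 0 is vacuous.) -/
def PeriodicOfOrder {V : Type*} (semi : V → Prop) (pre : V → Set V) : ℕ → V → Prop
  | 0, _ => True
  | 1, v => semi v ∧ ∀ w ∈ pre v, semi w
  | ν + 2, v => (semi v ∧ ∀ w ∈ pre v, semi w) ∧
      ∀ w ∈ pre v, PeriodicOfOrder semi pre (ν + 1) w

lemma PeriodicOfOrder.base {V : Type*} {semi : V → Prop} {pre : V → Set V} :
    ∀ (ν : ℕ) (v : V), PeriodicOfOrder semi pre (ν + 1) v →
      semi v ∧ ∀ w ∈ pre v, semi w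
  | 0, _, h => h
  | _ + 1, _, h => h.1

lemma PeriodicOfOrder.mono {V : Type*} {semi : V → Prop} {pre : V → Set V} :
    ∀ (ν : ℕ) (v : V), PeriodicOfOrder semi pre (ν + 1) v → PeriodicOfOrder semi pre ν v
  | 0, _, _ => trivial
  | 1, _, h => h.1
  | ν + 2, v, h => ⟨h.1, fun w hw => PeriodicOfOrder.mono (ν + 1) w (h.2 w hw)⟩

lemma PeriodicOfOrder.mono_le {V : Type*} {semi : V → Prop} {pre : V → Set V}
    {μ ν : ℕ} (hle : μ ≤ ν) {v : V} (h : PeriodicOfOrder semi pre ν v) :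
    PeriodicOfOrder semi pre μ v := by
  induction ν with
  | zero => obtain rfl := Nat.le_zero.mp hle; exact h
  | succ ν ih =>
    rcases Nat.eq_or_lt_of_le hle with rfl | hlt
    · exact h
    · exact ih (by omega) (PeriodicOfOrder.mono ν v h)

/-- For an explicit `s`-stage Runge–Kutta method applied with fixed step
size `h = T/p` (`p ∈ ℕ`, `p ≥ 1`) to a time-driven ODE, if the internal variable
`x_{I,i}` is periodic of order `s` at time `t^m`, then the `i`-th component of the
increment function satisfies `Φ_i(t^m, x^m, h) = Φ_i(t^{m-p}, x^{m-p}, h)`, and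
consequently the Runge–Kutta update satisfies `x_{I,i}^{m+1} = x_{I,i}^{m-p+1}`. -/
theorem periodic_increment_eq
    {nE nI s : ℕ} (hs : 0 < s)
    (fE : ℝ → Fin nE → ℝ)
    (fI : (Fin nE → ℝ) → (Fin nI → ℝ) → Fin nI → ℝ)
    (a : Fin s → Fin s → ℝ) (b c : Fin s → ℝ)
    (hexplicit : ∀ q r : Fin s, q ≤ r → a q r = 0)
    (hc1 : c ⟨0, hs⟩ = 0)
    (T h : ℝ) (p : ℕ) (hp : 1 ≤ p) (hT : h = T / p)
    (t : ℕ → ℝ) (ht : ∀ m, t (m + 1) = t m + h)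
    (xE : ℕ → Fin nE → ℝ) (xI : ℕ → Fin nI → ℝ)
    (kI : ℕ → Fin s → Fin nI → ℝ)
    (hxE : ∀ m, xE m = fE (t m))
    (hstage : ∀ (m : ℕ) (q : Fin s), kI m q =
        fI (fE (t m + c q * h))
          (fun i => xI m i +
            h * ∑ r ∈ univ.filter (fun r : Fin s => r < q), a q r * kI m r i))
    (hupdate : ∀ (m : ℕ) (i : Fin nI),
        xI (m + 1) i = xI m i + h * ∑ q, b q * kI m q i)
    (pre : Fin nE ⊕ Fin nI → Set (Fin nE ⊕ Fin nI))
    (hpreE : ∀ j : Fin nE, pre (Sum.inl j) = ∅)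
    (hdep : ∀ (i : Fin nI) (u w : Fin nE → ℝ) (v z : Fin nI → ℝ),
        (∀ j : Fin nE, Sum.inl j ∈ pre (Sum.inr i) → u j = w j) →
        (∀ j : Fin nI, Sum.inr j ∈ pre (Sum.inr i) → v j = z j) →
        fI u v i = fI w z i)
    (m : ℕ) (hm : p ≤ m) (i : Fin nI)
    (hper : PeriodicOfOrder
        (Sum.elim
          (fun j : Fin nE => ∀ r : Fin s,
            fE (t m + c r * h) j = fE (t (m - p) + c r * h) j)
          (fun j : Fin nI => xI m j = xI (m - p) j))
        pre s (Sum.inr i)) :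
    (∑ r, b r * kI m r i = ∑ r, b r * kI (m - p) r i) ∧
      xI (m + 1) i = xI (m - p + 1) i := by
  set semi := Sum.elim
      (fun j : Fin nE => ∀ r : Fin s,
        fE (t m + c r * h) j = fE (t (m - p) + c r * h) j)
      (fun j : Fin nI => xI m j = xI (m - p) j) with hsemi
  have key : ∀ n : ℕ, ∀ q : Fin s, q.val ≤ n → ∀ j : Fin nI,
      PeriodicOfOrder semi pre (n + 1) (Sum.inr j) → kI m q j = kI (m - p) q j := by
    intro n
    induction n using Nat.strong_induction_on with
    | _ n IH =>
      intro q hq j hj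
      rw [hstage, hstage]
      obtain ⟨hsj, hpre⟩ := PeriodicOfOrder.base n _ hj
      apply hdep
      · intro j' hj'
        exact (hpre _ hj') q
      · intro j' hj'
        have hx : xI m j' = xI (m - p) j' := hpre _ hj'
        rw [hx]
        congr 1
        congr 1
        apply Finset.sum_congr rfl
        intro r hr
        have hrq : r < q := (Finset.mem_filter.mp hr).2
        have hn1 : 1 ≤ n := by
          have : (r : ℕ) < (q : ℕ) := hrq
          omega
        obtain ⟨n', rfl⟩ : ∃ n', n = n' + 1 := ⟨n - 1, by omega⟩
        have hj'ord : PeriodicOfOrder semi pre (n' + 1) (Sum.inr j') := hj.2 _ hj'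
        have hr1 : (r : ℕ) + 1 ≤ n' + 1 := by
          have : (r : ℕ) < (q : ℕ) := hrq
          omega
        have := IH ((r : ℕ)) (by omega) r le_rfl j'
          (PeriodicOfOrder.mono_le hr1 hj'ord)
        rw [this]
  obtain ⟨s', rfl⟩ : ∃ s', s = s' + 1 := ⟨s - 1, by omega⟩
  have hΦ : ∑ r, b r * kI m r i = ∑ r, b r * kI (m - p) r i := by
    apply Finset.sum_congr rfl
    intro q _
    rw [key s' q (by omega) i hper]
  refine ⟨hΦ, ?_⟩
  have hxi : xI m i = xI (m - p) i := (PeriodicOfOrder.base s' _ hper).1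
  rw [hupdate, hupdate, hxi, hΦ]
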